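/- Expected smoothness of the stochastic gradient for minibatch sketches. Let f_1,…,f_n : ℝ^d → ℝ be differentiable, f := (1/n)∑_i f_i, f_C := (1/|C|)∑_{i∈C} f_i for nonempty C ⊆ [n], and let x* ∈ ℝ^d satisfy ∑_i ∇f_i(x*) = 0. Let G be a finite collection of nonempty subsets of [n] such that every i ∈ [n] lies in exactly c₁ ≥ 1 members of G, and let p_C > 0 for C ∈ G with ∑_{C∈G} p_C = 1. Assume: (a) for every i and every x: f_i(x) − f_i(x*) − ⟨∇f_i(x*), x − x*⟩ ≥ 0 (first-order convexity at x*); and (b) for every C ∈ G, there is L_C > 0 such that for all x: ‖∇f_C(x) − ∇f_C(x*)‖² ≤ 2L_C (f_C(x) − f_C(x*) − ⟨∇f_C(x*), x − x*⟩). Then for all x ∈ ℝ^d: ∑_{C∈G} p_C ‖(1/(n c₁ p_C)) ∑_{i∈C} (∇f_i(x) − ∇f_i(x*))‖² ≤ 2L₁ (f(x) − f(x*)), where L₁ := (1/(n c₁²)) · max_{i∈[n]} ∑_{C∈G : i∈C} |C| L_C / p_C. -/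

import Mathlib

/-!
Write `D_i := f_i(x) − f_i(x*) − ⟨∇f_i(x*), x − x*⟩ ≥ 0` for the Bregman divergences of the `f_i`.
Since gradients and Bregman divergences are linear in the function, smoothness of `f_C` says
`‖∑_{i∈C} (∇f_i(x) − ∇f_i(x*))‖² ≤ 2 L_C |C| ∑_{i∈C} D_i`. Summing over `C ∈ G` with weights
`1 / ((n c₁)² p_C)`, exchanging the two sums and bounding the weight `∑_{C ∋ i} |C| L_C / p_C` of
each `D_i` by its maximum leaves `∑_i D_i`, which equals `n (f(x) − f(x*))` because
`∑_i ∇f_i(x*) = 0`.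
-/

/-- The (Euclidean) gradient of `f : ℝ^d → ℝ` at `x`. -/
noncomputable def grad {d : ℕ} (f : (Fin d → ℝ) → ℝ) (x : Fin d → ℝ) : Fin d → ℝ :=
  fun k => fderiv ℝ f x (Pi.single k 1)

/-- Squared Euclidean norm. -/
def sq2 {d : ℕ} (v : Fin d → ℝ) : ℝ := ∑ k, (v k) ^ 2

/-- Euclidean inner product. -/
def inner2 {d : ℕ} (v w : Fin d → ℝ) : ℝ := ∑ k, v k * w k

open Finset

section

variable {d : ℕ}

lemma sq2_smul (c : ℝ) (v : Fin d → ℝ) : sq2 (c • v) = c ^ 2 * sq2 v := by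
  simp [sq2, mul_sum, mul_pow]

lemma inner2_smul_left (c : ℝ) (v w : Fin d → ℝ) : inner2 (c • v) w = c * inner2 v w := by
  simp [inner2, mul_sum, mul_assoc]

lemma inner2_sum_left {ι : Type*} (s : Finset ι) (v : ι → Fin d → ℝ) (w : Fin d → ℝ) :
    inner2 (∑ i ∈ s, v i) w = ∑ i ∈ s, inner2 (v i) w := by
  simp only [inner2, Finset.sum_apply, sum_mul]
  exact sum_comm

lemma inner2_zero_left (w : Fin d → ℝ) : inner2 0 w = 0 := by
  simp [inner2]

lemma grad_const_mul_sum {ι : Type*} (s : Finset ι) (f : ι → (Fin d → ℝ) → ℝ) (c : ℝ)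
    {y : Fin d → ℝ} (hf : ∀ i ∈ s, DifferentiableAt ℝ (f i) y) :
    grad (fun z => c * ∑ i ∈ s, f i z) y = c • ∑ i ∈ s, grad (f i) y := by
  have hderiv : fderiv ℝ (fun z => c * ∑ i ∈ s, f i z) y = c • ∑ i ∈ s, fderiv ℝ (f i) y :=
    ((HasFDerivAt.fun_sum fun i hi => (hf i hi).hasFDerivAt).const_mul c).fderiv
  ext k
  simp [grad, hderiv]

noncomputable def bregman (f : (Fin d → ℝ) → ℝ) (y x : Fin d → ℝ) : ℝ :=
  f x - f y - inner2 (grad f y) (x - y)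

lemma bregman_const_mul_sum {ι : Type*} (s : Finset ι) (f : ι → (Fin d → ℝ) → ℝ) (c : ℝ)
    {y : Fin d → ℝ} (hf : ∀ i ∈ s, DifferentiableAt ℝ (f i) y) (x : Fin d → ℝ) :
    bregman (fun z => c * ∑ i ∈ s, f i z) y x = c * ∑ i ∈ s, bregman (f i) y x := by
  simp only [bregman, grad_const_mul_sum s f c hf, inner2_smul_left, inner2_sum_left,
    sum_sub_distrib]
  ring

lemma sum_bregman_of_sum_grad_eq_zero {ι : Type*} (s : Finset ι) (f : ι → (Fin d → ℝ) → ℝ)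
    {y : Fin d → ℝ} (hy : ∑ i ∈ s, grad (f i) y = 0) (x : Fin d → ℝ) :
    ∑ i ∈ s, bregman (f i) y x = ∑ i ∈ s, f i x - ∑ i ∈ s, f i y := by
  simp only [bregman, sum_sub_distrib, ← inner2_sum_left, hy, inner2_zero_left, sub_zero]

lemma sq2_sum_grad_sub_le {ι : Type*} {C : Finset ι} (hC : C.Nonempty)
    {f : ι → (Fin d → ℝ) → ℝ} (hf : ∀ i ∈ C, Differentiable ℝ (f i))
    {F : (Fin d → ℝ) → ℝ} (hF : ∀ z, F z = (1 / (C.card : ℝ)) * ∑ i ∈ C, f i z)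
    {L : ℝ} {x y : Fin d → ℝ} (hsmooth : sq2 (grad F x - grad F y) ≤ 2 * L * bregman F y x) :
    sq2 (∑ i ∈ C, (grad (f i) x - grad (f i) y))
      ≤ 2 * L * C.card * ∑ i ∈ C, bregman (f i) y x := by
  obtain rfl : F = fun z => (1 / (C.card : ℝ)) * ∑ i ∈ C, f i z := funext hF
  have hcard : (C.card : ℝ) ≠ 0 := by exact_mod_cast hC.card_pos.ne'
  set v := ∑ i ∈ C, (grad (f i) x - grad (f i) y)
  set S := ∑ i ∈ C, bregman (f i) y x
  rw [grad_const_mul_sum C f _ fun i hi => (hf i hi) x,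
    grad_const_mul_sum C f _ fun i hi => (hf i hi) y, ← smul_sub, ← sum_sub_distrib,
    bregman_const_mul_sum C f _ (fun i hi => (hf i hi) y), sq2_smul] at hsmooth
  calc sq2 v = (C.card : ℝ) ^ 2 * ((1 / (C.card : ℝ)) ^ 2 * sq2 v) := by field_simp
    _ ≤ (C.card : ℝ) ^ 2 * (2 * L * ((1 / (C.card : ℝ)) * S)) := by gcongr
    _ = 2 * L * C.card * S := by field_simp

lemma mul_sq2_one_div_mul_smul_le {a p L c S : ℝ} (hp : 0 < p) {v : Fin d → ℝ}
    (hv : sq2 v ≤ 2 * L * c * S) :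
    p * sq2 ((1 / (a * p)) • v) ≤ 2 / a ^ 2 * (c * L / p * S) :=
  calc p * sq2 ((1 / (a * p)) • v) = sq2 v / (a ^ 2 * p) := by
        rw [sq2_smul]
        field_simp
    _ ≤ 2 * L * c * S / (a ^ 2 * p) := by gcongr
    _ = 2 / a ^ 2 * (c * L / p * S) := by ring

lemma sum_mul_sum_eq_sum_mul_sum_filter_mem {ι : Type*} [Fintype ι] [DecidableEq ι]
    (G : Finset (Finset ι)) (w : Finset ι → ℝ) (D : ι → ℝ) :
    ∑ C ∈ G, w C * ∑ i ∈ C, D i = ∑ i, D i * ∑ C ∈ G.filter (fun C => i ∈ C), w C := by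
  simp only [mul_sum]
  rw [sum_comm' (t' := univ) (s' := fun i => G.filter (fun C => i ∈ C)) (by simp)]
  simp only [mul_comm]

lemma sum_mul_sum_le_iSup_mul_sum {ι : Type*} [Fintype ι] [DecidableEq ι]
    (G : Finset (Finset ι)) (w : Finset ι → ℝ) {D : ι → ℝ} (hD : ∀ i, 0 ≤ D i) :
    ∑ C ∈ G, w C * ∑ i ∈ C, D i
      ≤ (⨆ i, ∑ C ∈ G.filter (fun C => i ∈ C), w C) * ∑ i, D i := by
  rw [sum_mul_sum_eq_sum_mul_sum_filter_mem, mul_sum]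
  refine sum_le_sum fun i _ => ?_
  rw [mul_comm]
  have hbdd := (Set.finite_range fun i => ∑ C ∈ G.filter (fun C => i ∈ C), w C).bddAbove
  exact mul_le_mul_of_nonneg_right (le_ciSup hbdd i) (hD i)

end

theorem expected_smoothness_stochastic_gradient_minibatch_general
    {d n : ℕ}
    (f : Fin n → (Fin d → ℝ) → ℝ) (hdiff : ∀ i, Differentiable ℝ (f i))
    (fbar : (Fin d → ℝ) → ℝ) (hfbar : ∀ x, fbar x = (1 / (n : ℝ)) * ∑ i, f i x)
    (fC : Finset (Fin n) → (Fin d → ℝ) → ℝ)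
    (hfC : ∀ C x, fC C x = (1 / (C.card : ℝ)) * ∑ i ∈ C, f i x)
    (xs : Fin d → ℝ) (hcrit : ∑ i, grad (f i) xs = 0)
    (G : Finset (Finset (Fin n))) (hGne : ∀ C ∈ G, C.Nonempty)
    (c₁ : ℕ)
    (p : Finset (Fin n) → ℝ) (hp : ∀ C ∈ G, 0 < p C)
    (hconv : ∀ (i : Fin n) (x : Fin d → ℝ),
      0 ≤ f i x - f i xs - inner2 (grad (f i) xs) (x - xs))
    (L : Finset (Fin n) → ℝ)
    (hsmooth : ∀ C ∈ G, ∀ x : Fin d → ℝ,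
      sq2 (grad (fC C) x - grad (fC C) xs)
        ≤ 2 * L C * (fC C x - fC C xs - inner2 (grad (fC C) xs) (x - xs)))
    (L₁ : ℝ)
    (hL₁ : L₁ = (1 / ((n : ℝ) * (c₁ : ℝ) ^ 2)) *
        (⨆ i : Fin n, ∑ C ∈ G.filter (fun C => i ∈ C), (C.card : ℝ) * L C / p C)) :
    ∀ x : Fin d → ℝ,
      ∑ C ∈ G, p C *
          sq2 ((1 / ((n : ℝ) * (c₁ : ℝ) * p C)) •
            ∑ i ∈ C, (grad (f i) x - grad (f i) xs))
        ≤ 2 * L₁ * (fbar x - fbar xs) := by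
  intro x
  have hbatch : ∀ C ∈ G, p C * sq2 ((1 / ((n : ℝ) * c₁ * p C)) •
        ∑ i ∈ C, (grad (f i) x - grad (f i) xs))
      ≤ 2 / ((n : ℝ) * c₁) ^ 2 * ((C.card : ℝ) * L C / p C * ∑ i ∈ C, bregman (f i) xs x) :=
    fun C hC => mul_sq2_one_div_mul_smul_le (hp C hC)
      (sq2_sum_grad_sub_le (hGne C hC) (fun i _ => hdiff i) (hfC C) (hsmooth C hC x))
  calc _ ≤ ∑ C ∈ G, 2 / ((n : ℝ) * c₁) ^ 2 *
          ((C.card : ℝ) * L C / p C * ∑ i ∈ C, bregman (f i) xs x) := sum_le_sum hbatch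
    _ = 2 / ((n : ℝ) * c₁) ^ 2 *
          ∑ C ∈ G, (C.card : ℝ) * L C / p C * ∑ i ∈ C, bregman (f i) xs x := by rw [mul_sum]
    _ ≤ 2 / ((n : ℝ) * c₁) ^ 2 *
          ((⨆ i : Fin n, ∑ C ∈ G.filter (fun C => i ∈ C), (C.card : ℝ) * L C / p C)
            * ∑ i, bregman (f i) xs x) := by
        gcongr
        exact sum_mul_sum_le_iSup_mul_sum G _ fun i => hconv i x
    _ = 2 * L₁ * (fbar x - fbar xs) := by
        rw [sum_bregman_of_sum_grad_eq_zero univ f hcrit, hL₁, hfbar, hfbar]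
        ring

/-- Expected smoothness of the stochastic gradient for minibatch sketches:
`∑_{C∈G} p_C ‖(1/(n c₁ p_C)) ∑_{i∈C}(∇fᵢ(x) − ∇fᵢ(x*))‖² ≤ 2L₁(f(x) − f(x*))`, where
`L₁ = (1/(n c₁²)) maxᵢ ∑_{C∈G : i∈C} |C| L_C / p_C`. -/
theorem expected_smoothness_stochastic_gradient_minibatch
    {d n : ℕ} (hn : 0 < n)
    (f : Fin n → (Fin d → ℝ) → ℝ) (hdiff : ∀ i, Differentiable ℝ (f i))
    (fbar : (Fin d → ℝ) → ℝ) (hfbar : ∀ x, fbar x = (1 / (n : ℝ)) * ∑ i, f i x)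
    (fC : Finset (Fin n) → (Fin d → ℝ) → ℝ)
    (hfC : ∀ C x, fC C x = (1 / (C.card : ℝ)) * ∑ i ∈ C, f i x)
    (xs : Fin d → ℝ) (hcrit : ∑ i, grad (f i) xs = 0)
    (G : Finset (Finset (Fin n))) (hGne : ∀ C ∈ G, C.Nonempty)
    (c₁ : ℕ) (hc₁ : 1 ≤ c₁)
    (hcov : ∀ i : Fin n, (G.filter (fun C => i ∈ C)).card = c₁)
    (p : Finset (Fin n) → ℝ) (hp : ∀ C ∈ G, 0 < p C) (hp1 : ∑ C ∈ G, p C = 1)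
    (hconv : ∀ (i : Fin n) (x : Fin d → ℝ),
      0 ≤ f i x - f i xs - inner2 (grad (f i) xs) (x - xs))
    (L : Finset (Fin n) → ℝ) (hLpos : ∀ C ∈ G, 0 < L C)
    (hsmooth : ∀ C ∈ G, ∀ x : Fin d → ℝ,
      sq2 (grad (fC C) x - grad (fC C) xs)
        ≤ 2 * L C * (fC C x - fC C xs - inner2 (grad (fC C) xs) (x - xs)))
    (L₁ : ℝ)
    (hL₁ : L₁ = (1 / ((n : ℝ) * (c₁ : ℝ) ^ 2)) *
        (⨆ i : Fin n, ∑ C ∈ G.filter (fun C => i ∈ C), (C.card : ℝ) * L C / p C)) :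
    ∀ x : Fin d → ℝ,
      ∑ C ∈ G, p C *
          sq2 ((1 / ((n : ℝ) * (c₁ : ℝ) * p C)) •
            ∑ i ∈ C, (grad (f i) x - grad (f i) xs))
        ≤ 2 * L₁ * (fbar x - fbar xs) :=
  expected_smoothness_stochastic_gradient_minibatch_general f hdiff fbar hfbar fC hfC xs hcrit G
    hGne c₁ p hp hconv L hsmooth L₁ hL₁
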